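/- Let f ∈ L¹(ℝ) be nonnegative and define Q(z) = |f̂(z)| / (π·√10 · ∫₀^{1/z} f*(x) dx) for z > 0. If Q(z) > N for some z > 0 (with N a positive integer), then #crests(f) > N, i.e. f cannot be written as a sum of N or fewer nonnegative functions with pairwise almost disjoint supports each cresting once. -/

import Mathlib

/-!
Let `g` be a piece cresting at `b` and `s = π / z`. Translating by `s` multiplies `ĝ(z)` by
`e^{iπ} = -1`, so `2 |ĝ(z)| ≤ ∫ |g x - g (x + s)|`, and for a function increasing up to `b` and
decreasing afterwards this is at most `2 ∫_{b-s}^{b+s} g`. Since `g ≥ g (b - 2x)` on an interval of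
length `2x` and `g ≤ f`, we get `g (b - 2x) ≤ f*(x)`, whence `∫_{b-s}^{b} g ≤ 2 ∫_0^{s/2} f*`, and
symmetrically on the right. Summing over the `m ≤ N` pieces and using that `f*` decreases,
`∫_0^{π/2z} f* ≤ 2 ∫_0^{1/z} f*`, gives `|f̂(z)| ≤ 8 N ∫_0^{1/z} f* ≤ π √10 N ∫_0^{1/z} f*`.
-/

open MeasureTheory Real Set

/-- The Fourier transform on the line: `f̂(z) = ∫ f(x) e^{-ixz} dx`. -/
noncomputable def fourierTransform (f : ℝ → ℝ) (z : ℝ) : ℂ :=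
  ∫ x : ℝ, (f x : ℂ) * Complex.exp (-(x * z) * Complex.I)

/-- The decreasing rearrangement `f*(x) = inf {α > 0 : |{t : |f t| > α}| ≤ x}`. -/
noncomputable def decreasingRearrangement (f : ℝ → ℝ) (x : ℝ) : ℝ :=
  sInf {α : ℝ | 0 < α ∧ volume {t : ℝ | α < |f t|} ≤ ENNReal.ofReal x}

/-- A nonnegative function crests once: increasing up to some `b`, decreasing afterwards. -/
def CrestsOnce (f : ℝ → ℝ) : Prop :=
  ∃ b : ℝ, MonotoneOn f (Set.Iic b) ∧ AntitoneOn f (Set.Ici b)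

/-- `f` can be written as a sum of `n` nonnegative functions with pairwise almost
disjoint supports, each of which crests once. -/
def HasCrestDecomp (f : ℝ → ℝ) (n : ℕ) : Prop :=
  ∃ g : Fin n → ℝ → ℝ,
    (∀ i, ∀ x, 0 ≤ g i x) ∧
    (∀ i, CrestsOnce (g i)) ∧
    (Pairwise fun i j =>
      volume (Function.support (g i) ∩ Function.support (g j)) = 0) ∧
    (∀ x, f x = ∑ i, g i x)

/-- `#crests(f) = N` : `N` is the least number of pieces in such a decomposition. -/
def CrestsEq (f : ℝ → ℝ) (N : ℕ) : Prop :=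
  HasCrestDecomp f N ∧ ∀ m : ℕ, m < N → ¬ HasCrestDecomp f m

section DecreasingRearrangement

variable {f : ℝ → ℝ} {x : ℝ}

theorem decreasingRearrangement_nonneg (f : ℝ → ℝ) (x : ℝ) : 0 ≤ decreasingRearrangement f x :=
  Real.sInf_nonneg fun _ hα => hα.1.le

theorem decreasingRearrangement_comp_neg (f : ℝ → ℝ) :
    decreasingRearrangement (fun t => f (-t)) = decreasingRearrangement f := by
  ext x
  simp only [decreasingRearrangement]
  congr! 5 with α
  exact Measure.measure_preimage_neg volume {t | α < |f t|}

theorem MeasureTheory.Integrable.exists_volume_lt_abs_le (hf : Integrable f) (hx : 0 < x) :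
    ∃ α, 0 < α ∧ volume {t | α < |f t|} ≤ ENNReal.ofReal x := by
  set α := (∫ t, |f t|) / x + 1
  have hα : 0 < α := by positivity
  have hfin : volume {t | α ≤ |f t|} < ⊤ := hf.measure_norm_ge_lt_top hα
  have hmarkov : α * volume.real {t | α ≤ |f t|} ≤ ∫ t, |f t| :=
    mul_meas_ge_le_integral_of_nonneg (ae_of_all _ fun t => abs_nonneg (f t)) hf.abs α
  have hαx : α * x = (∫ t, |f t|) + x := by simp only [α]; field_simp
  have hsub : {t | α < |f t|} ⊆ {t | α ≤ |f t|} :=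
    ofPred_subset_ofPred.2 fun _ => le_of_lt
  refine ⟨α, hα, (measure_mono hsub).trans ?_⟩
  rw [← ofReal_measureReal hfin.ne]
  exact ENNReal.ofReal_le_ofReal
    (by nlinarith [measureReal_nonneg (μ := volume) (s := {t | α ≤ |f t|})])

theorem le_decreasingRearrangement (hf : Integrable f) (hx : 0 < x) {S : Set ℝ} {c : ℝ}
    (hS : ENNReal.ofReal x < volume S) (hc : ∀ t ∈ S, c ≤ |f t|) :
    c ≤ decreasingRearrangement f x := by
  obtain ⟨α₀, hα₀⟩ := hf.exists_volume_lt_abs_le hx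
  refine le_csInf ⟨α₀, hα₀⟩ fun α ⟨_, hα⟩ => not_lt.1 fun hαc => ?_
  exact (hS.trans_le ((measure_mono fun t ht => hαc.trans_le (hc t ht)).trans hα)).false

theorem decreasingRearrangement_antitoneOn (hf : Integrable f) :
    AntitoneOn (decreasingRearrangement f) (Ioi 0) := fun _ hx _ _ hxy =>
  csInf_le_csInf ⟨0, fun _ hα => hα.1.le⟩ (hf.exists_volume_lt_abs_le hx)
    fun _ hα => ⟨hα.1, hα.2.trans (ENNReal.ofReal_le_ofReal hxy)⟩

end DecreasingRearrangement

section Fourier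

theorem norm_fourierTransform_le_integral_abs (f : ℝ → ℝ) (z : ℝ) :
    ‖fourierTransform f z‖ ≤ ∫ x, |f x| := by
  refine (norm_integral_le_integral_norm _).trans_eq (integral_congr_ae (ae_of_all _ fun x => ?_))
  simp [Complex.norm_exp]

theorem fourierTransform_comp_add_right (f : ℝ → ℝ) (s z : ℝ) :
    fourierTransform (fun x => f (x + s)) z =
      Complex.exp (s * z * Complex.I) * fourierTransform f z := by
  rw [fourierTransform, fourierTransform, ← integral_const_mul]
  conv_rhs => rw [← integral_add_right_eq_self _ s]
  congr 1 with x
  rw [mul_left_comm, ← Complex.exp_add]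
  push_cast
  ring_nf

theorem MeasureTheory.Integrable.fourierIntegrand {f : ℝ → ℝ} (hf : Integrable f) (z : ℝ) :
    Integrable fun x : ℝ => (f x : ℂ) * Complex.exp (-(x * z) * Complex.I) := by
  refine hf.ofReal.mul_bdd (c := 1) (Continuous.aestronglyMeasurable (by fun_prop))
    (ae_of_all _ fun x => ?_)
  simp [Complex.norm_exp]

theorem fourierTransform_sub {f g : ℝ → ℝ} (hf : Integrable f) (hg : Integrable g) (z : ℝ) :
    fourierTransform (fun x => f x - g x) z = fourierTransform f z - fourierTransform g z := by
  rw [fourierTransform, fourierTransform, fourierTransform,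
    ← integral_sub (hf.fourierIntegrand z) (hg.fourierIntegrand z)]
  congr 1 with x
  push_cast
  ring

theorem fourierTransform_sum {ι : Type*} (s : Finset ι) {f : ι → ℝ → ℝ}
    (hf : ∀ i ∈ s, Integrable (f i)) (z : ℝ) :
    fourierTransform (fun x => ∑ i ∈ s, f i x) z = ∑ i ∈ s, fourierTransform (f i) z := by
  simp only [fourierTransform]
  rw [← integral_finsetSum s fun i hi => (hf i hi).fourierIntegrand z]
  congr 1 with x
  push_cast
  rw [Finset.sum_mul]

end Fourier

section Unimodal

variable {f g : ℝ → ℝ} {b s : ℝ}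

theorem integral_abs_sub_comp_add_le (hg : Integrable g) (hg0 : ∀ x, 0 ≤ g x)
    (mono : MonotoneOn g (Iic b)) (anti : AntitoneOn g (Ici b)) (hs : 0 ≤ s) :
    ∫ x, |g x - g (x + s)| ≤ 2 * ∫ x in (b - s)..(b + s), g x := by
  set L := (Iic (b - s)).indicator g
  set R := (Ioi (b + s)).indicator g
  -- left of `b - s` the smaller of `g x`, `g (x + s)` is `g x`; right of `b` it is `g (x + s)`
  have hpointwise : ∀ x, |g x - g (x + s)| ≤ g x + g (x + s) - 2 * L x - 2 * R (x + s) := by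
    intro x
    simp only [L, R, indicator_apply, mem_Iic, mem_Ioi, add_lt_add_iff_right]
    by_cases hl : x ≤ b - s
    · have : g x ≤ g (x + s) :=
        mono (mem_Iic.2 (by linarith)) (mem_Iic.2 (by linarith)) (by linarith)
      rw [if_pos hl, if_neg (by linarith), abs_sub_comm, abs_of_nonneg (by linarith)]
      linarith
    by_cases hr : b < x
    · have : g (x + s) ≤ g x := anti (mem_Ici.2 hr.le) (mem_Ici.2 (by linarith)) (by linarith)
      rw [if_neg hl, if_pos hr, abs_of_nonneg (by linarith)]
      linarith
    · rw [if_neg hl, if_neg hr, abs_le]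
      constructor <;> linarith [hg0 x, hg0 (x + s)]
  have hgs : Integrable fun x => g (x + s) := hg.comp_add_right s
  have hL : Integrable fun x => 2 * L x := (hg.indicator measurableSet_Iic).const_mul 2
  have hR : Integrable fun x => 2 * R (x + s) :=
    ((hg.indicator measurableSet_Ioi).comp_add_right s).const_mul 2
  have hgg : Integrable fun x => g x + g (x + s) := hg.add hgs
  have hgL : Integrable fun x => g x + g (x + s) - 2 * L x := hgg.sub hL
  calc ∫ x, |g x - g (x + s)|
      ≤ ∫ x, (g x + g (x + s) - 2 * L x - 2 * R (x + s)) :=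
        integral_mono (hg.sub hgs).abs (hgL.sub hR) hpointwise
    _ = 2 * ((∫ x in Iic (b + s), g x) + (∫ x in Ioi (b + s), g x) - ∫ x in Iic (b - s), g x)
          - 2 * ∫ x in Ioi (b + s), g x := by
        rw [integral_sub hgL hR, integral_sub hgg hL, integral_add hg hgs, integral_const_mul,
          integral_const_mul, integral_add_right_eq_self g s,
          integral_add_right_eq_self R s, integral_indicator measurableSet_Iic,
          integral_indicator measurableSet_Ioi,
          intervalIntegral.integral_Iic_add_Ioi hg.integrableOn hg.integrableOn]
        ring
    _ = 2 * ∫ x in (b - s)..(b + s), g x := by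
        rw [← intervalIntegral.integral_Iic_sub_Iic hg.integrableOn hg.integrableOn]
        ring

theorem norm_fourierTransform_le_integral_of_monotoneOn_of_antitoneOn (hg : Integrable g)
    (hg0 : ∀ x, 0 ≤ g x) (mono : MonotoneOn g (Iic b)) (anti : AntitoneOn g (Ici b)) {z : ℝ} (hz : 0 < z) :
    ‖fourierTransform g z‖ ≤ ∫ x in (b - π / z)..(b + π / z), g x := by
  set s := π / z
  have hshift : fourierTransform (fun x => g (x + s)) z = -fourierTransform g z := by
    have hz' : (z : ℂ) ≠ 0 := mod_cast hz.ne'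
    have : (s : ℂ) * z = π := by simp only [s]; push_cast; field_simp
    rw [fourierTransform_comp_add_right, this, Complex.exp_pi_mul_I, neg_one_mul]
  have htwice : 2 * ‖fourierTransform g z‖ ≤ ∫ x, |g x - g (x + s)| :=
    calc 2 * ‖fourierTransform g z‖
        = ‖fourierTransform g z - fourierTransform (fun x => g (x + s)) z‖ := by
          rw [hshift, sub_neg_eq_add, ← two_mul, norm_mul, Complex.norm_two]
      _ = ‖fourierTransform (fun x => g x - g (x + s)) z‖ := by
          rw [fourierTransform_sub hg (hg.comp_add_right s)]
      _ ≤ ∫ x, |g x - g (x + s)| := norm_fourierTransform_le_integral_abs _ z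
  linarith [integral_abs_sub_comp_add_le hg hg0 mono anti (by positivity : 0 ≤ s)]

theorem MonotoneOn.integral_le_two_mul_integral_decreasingRearrangement
    (mono : MonotoneOn g (Iic b)) (hf : Integrable f) (hgf : ∀ x, g x ≤ f x) (hs : 0 ≤ s)
    (hF : IntervalIntegrable (decreasingRearrangement f) volume 0 (s / 2)) :
    ∫ x in (b - s)..b, g x ≤ 2 * ∫ x in (0 : ℝ)..(s / 2), decreasingRearrangement f x := by
  have hscale : ∫ x in (b - s)..b, g x = 2 * ∫ x in (0 : ℝ)..(s / 2), g (b - 2 * x) := by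
    rw [intervalIntegral.integral_comp_sub_mul g two_ne_zero, smul_eq_mul, mul_zero, sub_zero,
      mul_div_cancel₀ s two_ne_zero, mul_inv_cancel_left₀ two_ne_zero]
  have hanti : AntitoneOn (fun x => g (b - 2 * x)) (uIcc 0 (s / 2)) := fun x hx y hy hxy =>
    mono (mem_Iic.2 (by linarith [(uIcc_of_le (by linarith : 0 ≤ s / 2) ▸ hy).1]))
      (mem_Iic.2 (by linarith [(uIcc_of_le (by linarith : 0 ≤ s / 2) ▸ hx).1])) (by linarith)
  rw [hscale]
  gcongr
  refine intervalIntegral.integral_mono_on_of_le_Ioo (by linarith) hanti.intervalIntegrable hF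
    fun x hx => le_decreasingRearrangement hf hx.1 (S := Icc (b - 2 * x) b) ?_ fun t ht => ?_
  · rw [Real.volume_Icc, sub_sub_cancel]
    exact ENNReal.ofReal_lt_ofReal_iff'.2 ⟨by linarith [hx.1], by linarith [hx.1]⟩
  · calc g (b - 2 * x) ≤ g t := mono (mem_Iic.2 (by linarith [ht.1, ht.2])) (mem_Iic.2 ht.2) ht.1
      _ ≤ f t := hgf t
      _ ≤ |f t| := le_abs_self _

theorem AntitoneOn.integral_le_two_mul_integral_decreasingRearrangement
    (anti : AntitoneOn g (Ici b)) (hf : Integrable f) (hgf : ∀ x, g x ≤ f x) (hs : 0 ≤ s)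
    (hF : IntervalIntegrable (decreasingRearrangement f) volume 0 (s / 2)) :
    ∫ x in b..(b + s), g x ≤ 2 * ∫ x in (0 : ℝ)..(s / 2), decreasingRearrangement f x := by
  have mono : MonotoneOn (fun x => g (-x)) (Iic (-b)) := fun x hx y hy hxy =>
    anti (mem_Ici.2 (le_neg_of_le_neg hy)) (mem_Ici.2 (le_neg_of_le_neg hx)) (neg_le_neg hxy)
  have := mono.integral_le_two_mul_integral_decreasingRearrangement (f := fun x => f (-x))
    hf.comp_neg (fun x => hgf (-x)) hs (by rwa [decreasingRearrangement_comp_neg])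
  rwa [intervalIntegral.integral_comp_neg, decreasingRearrangement_comp_neg, neg_neg, neg_sub,
    sub_neg_eq_add, add_comm] at this

end Unimodal

section Doubling

variable {F : ℝ → ℝ} {t u : ℝ}

theorem AntitoneOn.intervalIntegrable_zero (hF : AntitoneOn F (Ioi 0)) (ht : 0 < t)
    (hFt : IntervalIntegrable F volume 0 t) (hu : 0 ≤ u) : IntervalIntegrable F volume 0 u := by
  rcases le_total u t with hut | htu
  · exact hFt.mono_set (uIcc_subset_uIcc_left (mem_uIcc_of_le hu hut))
  · refine hFt.trans (AntitoneOn.intervalIntegrable (hF.mono fun x hx => ?_))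
    exact ht.trans_le (uIcc_of_le htu ▸ hx).1

theorem integral_zero_le_two_mul_of_antitoneOn (hF : AntitoneOn F (Ioi 0)) (hF0 : ∀ x, 0 ≤ F x)
    (ht : 0 < t) (hFt : IntervalIntegrable F volume 0 t) (hu : 0 ≤ u) (hut : u ≤ 2 * t) :
    ∫ x in (0 : ℝ)..u, F x ≤ 2 * ∫ x in (0 : ℝ)..t, F x := by
  have hF2t := hF.intervalIntegrable_zero ht hFt (by positivity : 0 ≤ 2 * t)
  have hF2 : IntervalIntegrable (fun x => F (2 * x)) volume 0 t := by
    simpa using hF2t.comp_mul_left (c := 2)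
  calc ∫ x in (0 : ℝ)..u, F x
      ≤ ∫ x in (0 : ℝ)..(2 * t), F x :=
        intervalIntegral.integral_mono_interval le_rfl hu hut (ae_of_all _ hF0) hF2t
    _ = 2 * ∫ x in (0 : ℝ)..t, F (2 * x) := by
        rw [intervalIntegral.integral_comp_mul_left F two_ne_zero, mul_zero, smul_eq_mul,
          mul_inv_cancel_left₀ two_ne_zero]
    _ ≤ 2 * ∫ x in (0 : ℝ)..t, F x := by
        gcongr
        refine intervalIntegral.integral_mono_on_of_le_Ioo ht.le hF2 hFt fun x hx => ?_
        exact hF hx.1 (mem_Ioi.2 (by linarith [hx.1])) (by linarith [hx.1])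

end Doubling

theorem CrestsOnce.aemeasurable {g : ℝ → ℝ} (hg : CrestsOnce g) : AEMeasurable g := by
  obtain ⟨b, mono, anti⟩ := hg
  have hcover : (volume : Measure ℝ) ≤ volume.restrict (Iic b) + volume.restrict (Ici b) := by
    simpa only [Iic_union_Ici, Measure.restrict_univ] using
      Measure.restrict_union_le (μ := volume) (Iic b) (Ici b)
  exact ((aemeasurable_restrict_of_monotoneOn measurableSet_Iic mono).add_measure
    (aemeasurable_restrict_of_antitoneOn measurableSet_Ici anti)).mono_measure hcover

theorem CrestsOnce.norm_fourierTransform_le {f g : ℝ → ℝ} (hc : CrestsOnce g) (hf : Integrable f)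
    (hg : Integrable g) (hg0 : ∀ x, 0 ≤ g x) (hgf : ∀ x, g x ≤ f x) {z : ℝ} (hz : 0 < z)
    (hF : IntervalIntegrable (decreasingRearrangement f) volume 0 (π / z / 2)) :
    ‖fourierTransform g z‖ ≤ 4 * ∫ x in (0 : ℝ)..(π / z / 2), decreasingRearrangement f x := by
  obtain ⟨b, mono, anti⟩ := hc
  have hs : 0 ≤ π / z := by positivity
  calc ‖fourierTransform g z‖ ≤ ∫ x in (b - π / z)..(b + π / z), g x :=
        norm_fourierTransform_le_integral_of_monotoneOn_of_antitoneOn hg hg0 mono anti hz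
    _ = (∫ x in (b - π / z)..b, g x) + ∫ x in b..(b + π / z), g x :=
        (intervalIntegral.integral_add_adjacent_intervals hg.intervalIntegrable
          hg.intervalIntegrable).symm
    _ ≤ _ := by
        linarith [mono.integral_le_two_mul_integral_decreasingRearrangement hf hgf hs hF,
          anti.integral_le_two_mul_integral_decreasingRearrangement hf hgf hs hF]

theorem norm_fourierTransform_le_of_hasCrestDecomp {f : ℝ → ℝ} {m : ℕ} (hf : Integrable f)
    (hd : HasCrestDecomp f m) {z : ℝ} (hz : 0 < z)
    (hF : IntervalIntegrable (decreasingRearrangement f) volume 0 (1 / z)) :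
    ‖fourierTransform f z‖ ≤ m * (8 * ∫ x in (0 : ℝ)..(1 / z), decreasingRearrangement f x) := by
  obtain ⟨g, hg0, hgc, -, hfg⟩ := hd
  have hgf : ∀ i x, g i x ≤ f x := fun i x =>
    hfg x ▸ Finset.single_le_sum (fun j _ => hg0 j x) (Finset.mem_univ i)
  have hg : ∀ i, Integrable (g i) := fun i =>
    hf.mono' (hgc i).aemeasurable.aestronglyMeasurable
      (ae_of_all _ fun x => (abs_of_nonneg (hg0 i x)).trans_le (hgf i x))
  have hFanti := decreasingRearrangement_antitoneOn hf
  have hu : π / z / 2 ≤ 2 * (1 / z) :=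
    calc π / z / 2 = π / 2 * (1 / z) := by ring
      _ ≤ 2 * (1 / z) := by gcongr; linarith [pi_le_four]
  have hF' := hFanti.intervalIntegrable_zero (by positivity) hF (by positivity : 0 ≤ π / z / 2)
  have hdouble := integral_zero_le_two_mul_of_antitoneOn hFanti (decreasingRearrangement_nonneg f)
    (by positivity) hF (by positivity) hu
  calc ‖fourierTransform f z‖ = ‖∑ i, fourierTransform (g i) z‖ := by
        rw [← fourierTransform_sum _ fun i _ => hg i, ← funext hfg]
    _ ≤ ∑ i, ‖fourierTransform (g i) z‖ := norm_sum_le _ _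
    _ ≤ ∑ _i : Fin m, 4 * ∫ x in (0 : ℝ)..(π / z / 2), decreasingRearrangement f x :=
        Finset.sum_le_sum fun i _ =>
          (hgc i).norm_fourierTransform_le hf (hg i) (hg0 i) (hgf i) hz hF'
    _ ≤ m * (8 * ∫ x in (0 : ℝ)..(1 / z), decreasingRearrangement f x) := by
        rw [Finset.sum_const, Finset.card_univ, Fintype.card_fin, nsmul_eq_mul]
        exact mul_le_mul_of_nonneg_left (by linarith) m.cast_nonneg

theorem crests_gt_of_Q_gt_general (f : ℝ → ℝ) (hf : Integrable f)
    (N : ℕ)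
    (h : ∃ z : ℝ, 0 < z ∧
      ‖fourierTransform f z‖ /
        (π * Real.sqrt 10 * ∫ x in (0:ℝ)..(1/z), decreasingRearrangement f x) > N) :
    ∀ m : ℕ, m ≤ N → ¬ HasCrestDecomp f m := by
  intro m hm hd
  obtain ⟨z, hz, hQ⟩ := h
  set D := ∫ x in (0:ℝ)..(1/z), decreasingRearrangement f x
  have hD0 : 0 ≤ D := intervalIntegral.integral_nonneg (by positivity)
    fun x _ => decreasingRearrangement_nonneg f x
  have hD : D ≠ 0 := fun hD => by simp [hD] at hQ; linarith [N.cast_nonneg (α := ℝ)]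
  have h8 : 8 ≤ π * √10 := by
    have : 3 ≤ √10 := by rw [show (3 : ℝ) = √9 by norm_num]; gcongr; norm_num
    nlinarith [pi_gt_three]
  rw [gt_iff_lt, lt_div_iff₀ (by positivity)] at hQ
  refine lt_irrefl ‖fourierTransform f z‖ ?_
  calc ‖fourierTransform f z‖
      ≤ m * (8 * D) := norm_fourierTransform_le_of_hasCrestDecomp hf hd hz
        (intervalIntegral.intervalIntegrable_of_integral_ne_zero hD)
    _ ≤ N * (π * √10 * D) := by gcongr
    _ < ‖fourierTransform f z‖ := hQ

/-- Theorem 2: if `Q(z) > N` for some `z > 0` then `#crests(f) > N`, i.e. `f` admits no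
decomposition into `N` or fewer nonnegative, almost-disjointly-supported pieces each
cresting once. -/
theorem crests_gt_of_Q_gt (f : ℝ → ℝ) (hf : Integrable f)
    (hpos : ∀ x, 0 ≤ f x) (N : ℕ) (hN : 0 < N)
    (h : ∃ z : ℝ, 0 < z ∧
      ‖fourierTransform f z‖ /
        (π * Real.sqrt 10 * ∫ x in (0:ℝ)..(1/z), decreasingRearrangement f x) > N) :
    ∀ m : ℕ, m ≤ N → ¬ HasCrestDecomp f m :=
  crests_gt_of_Q_gt_general f hf N h
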